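/- arXiv:1911.07901 — 7 statements merged into one kernel-verified Lean document; each statement's English description precedes it below -/
import Mathlib

section
/- Let $d \ge 1$ and let $(j_n)_{n\ge1}$ be a strictly increasing sequence of positive reals with $\sum_{n\ge1} j_n^{-(d+1)} < \infty$. Define, for $r \in (0, j_1)$, $\varphi(r) = 1 - (d+1)\sum_{n\ge1} \frac{r^{d+1}}{j_n^{d+1} - r^{d+1}}$ and $u(r) = \varphi(r)^2 - 4\varphi(r) + 2$. Then $u$ is continuous and strictly increasing on $(0, j_1)$. -/
/-!
Each term `r ^ c / (j n ^ c - r ^ c)` is increasing in `r ∈ [0, j 0)` and bounded by a constant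
times `(j n ^ c)⁻¹`, so the series is continuous (M-test) and strictly increasing; hence `φ` is
continuous, strictly decreasing and `< 1`. Since `x ↦ x ^ 2 - 4 x + 2 = (x - 2) ^ 2 - 2`
decreases on `x ≤ 2`, `u` is continuous and strictly increasing.
-/

open Set

lemma div_sub_lt_div_sub {s t p : ℝ} (hs : 0 ≤ s) (hst : s < t) (htp : t < p) :
    s / (p - s) < t / (p - t) := by
  rw [div_lt_div_iff₀ (by linarith) (by linarith)]
  nlinarith

lemma div_sub_le_mul_inv {a b x : ℝ} (ha : 0 ≤ a) (hab : a < b) (hbx : b ≤ x) :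
    a / (x - a) ≤ a * b / (b - a) * x⁻¹ := by
  rw [← div_eq_mul_inv, div_div, div_le_div_iff₀ (by linarith)
    (mul_pos (by linarith) (by linarith))]
  nlinarith [mul_nonneg (mul_nonneg ha ha) (sub_nonneg.2 hbx)]

section ZeroSeries

variable {c : ℕ} {j : ℕ → ℝ}

lemma pow_lt_pow_of_lt_min (hc : c ≠ 0) (hj : ∀ n, j 0 ≤ j n) {r : ℝ} (hr0 : 0 ≤ r)
    (hr : r < j 0) (n : ℕ) : r ^ c < j n ^ c :=
  pow_lt_pow_left₀ (hr.trans_le (hj n)) hr0 hc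

lemma summable_pow_div_sub_pow (hc : c ≠ 0) (hj : ∀ n, j 0 ≤ j n)
    (hsum : Summable fun n => (j n ^ c)⁻¹) {r : ℝ} (hr0 : 0 ≤ r) (hr : r < j 0) :
    Summable fun n => r ^ c / (j n ^ c - r ^ c) := by
  have hlt := pow_lt_pow_of_lt_min hc hj hr0 hr
  refine (hsum.mul_left (r ^ c * j 0 ^ c / (j 0 ^ c - r ^ c))).of_nonneg_of_le
    (fun n => div_nonneg (pow_nonneg hr0 c) (sub_pos.2 (hlt n)).le) fun n => ?_
  exact div_sub_le_mul_inv (pow_nonneg hr0 c) (hlt 0)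
    (pow_le_pow_left₀ (hr0.trans hr.le) (hj n) c)

lemma pow_div_sub_pow_lt (hc : c ≠ 0) (hj : ∀ n, j 0 ≤ j n) {x y : ℝ} (hx : 0 ≤ x)
    (hxy : x < y) (hy : y < j 0) (n : ℕ) :
    x ^ c / (j n ^ c - x ^ c) < y ^ c / (j n ^ c - y ^ c) :=
  div_sub_lt_div_sub (pow_nonneg hx c) (pow_lt_pow_left₀ hxy hx hc)
    (pow_lt_pow_of_lt_min hc hj (hx.trans hxy.le) hy n)

variable (hc : c ≠ 0) (hj : ∀ n, j 0 ≤ j n) (hsum : Summable fun n => (j n ^ c)⁻¹)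
include hc hj hsum

lemma strictMonoOn_tsum_pow_div_sub_pow :
    StrictMonoOn (fun r => ∑' n, r ^ c / (j n ^ c - r ^ c)) (Ico 0 (j 0)) :=
  fun _ hx _ hy hxy => Summable.tsum_lt_tsum (i := 0)
    (fun n => (pow_div_sub_pow_lt hc hj hx.1 hxy hy.2 n).le)
    (pow_div_sub_pow_lt hc hj hx.1 hxy hy.2 0)
    (summable_pow_div_sub_pow hc hj hsum hx.1 hx.2)
    (summable_pow_div_sub_pow hc hj hsum hy.1 hy.2)

lemma tsum_pow_div_sub_pow_pos {r : ℝ} (hr : r ∈ Ioo 0 (j 0)) :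
    0 < ∑' n, r ^ c / (j n ^ c - r ^ c) := by
  have hzero : ∑' n, (0 : ℝ) ^ c / (j n ^ c - 0 ^ c) = 0 := by simp [zero_pow hc]
  simpa [hzero] using strictMonoOn_tsum_pow_div_sub_pow hc hj hsum
    ⟨le_rfl, hr.1.trans hr.2⟩ (Ioo_subset_Ico_self hr) hr.1

lemma continuousOn_tsum_pow_div_sub_pow :
    ContinuousOn (fun r => ∑' n, r ^ c / (j n ^ c - r ^ c)) (Ico 0 (j 0)) := by
  intro x hx
  obtain ⟨b, hxb, hb⟩ := exists_between hx.2
  have hb0 : 0 ≤ b := hx.1.trans hxb.le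
  -- Weierstrass M-test on `[0, b)`, dominated by the terms at `b`.
  have hcont : ContinuousOn (fun r => ∑' n, r ^ c / (j n ^ c - r ^ c)) (Ico 0 b) := by
    refine continuousOn_tsum (fun n => ?_) (summable_pow_div_sub_pow hc hj hsum hb0 hb)
      fun n r hr => ?_
    · exact (continuousOn_pow c).div (continuousOn_const.sub (continuousOn_pow c))
        fun r hr => (sub_pos.2 (pow_lt_pow_of_lt_min hc hj hr.1 (hr.2.trans hb) n)).ne'
    · rw [Real.norm_of_nonneg (div_nonneg (pow_nonneg hr.1 c)
        (sub_pos.2 (pow_lt_pow_of_lt_min hc hj hr.1 (hr.2.trans hb) n)).le)]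
      exact (pow_div_sub_pow_lt hc hj hr.1 hr.2 hb n).le
  exact (hcont x ⟨hx.1, hxb⟩).mono_of_mem_nhdsWithin
    (mem_nhdsWithin.2 ⟨Iio b, isOpen_Iio, hxb, fun r hr => ⟨hr.2.1, hr.1⟩⟩)

end ZeroSeries

lemma strictMonoOn_sq_sub_four_mul_add_two {s : Set ℝ} {φ : ℝ → ℝ} (hφ : StrictAntiOn φ s)
    (hφ2 : ∀ r ∈ s, φ r ≤ 2) : StrictMonoOn (fun r => φ r ^ 2 - 4 * φ r + 2) s := by
  intro x hx y hy hxy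
  have hlt := hφ hx hy hxy
  nlinarith [hφ2 x hx]

theorem stmt_1_general (d : ℕ) (j : ℕ → ℝ) (hj : StrictMono j)
    (hsum : Summable fun n => ((j n) ^ (d + 1))⁻¹)
    (φ u : ℝ → ℝ)
    (hφ : ∀ r ∈ Set.Ioo (0 : ℝ) (j 0),
      φ r = 1 - ((d : ℝ) + 1) * ∑' n, r ^ (d + 1) / ((j n) ^ (d + 1) - r ^ (d + 1)))
    (hu : ∀ r ∈ Set.Ioo (0 : ℝ) (j 0), u r = (φ r) ^ 2 - 4 * φ r + 2) :
    ContinuousOn u (Set.Ioo (0 : ℝ) (j 0)) ∧ StrictMonoOn u (Set.Ioo (0 : ℝ) (j 0)) := by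
  have hc : d + 1 ≠ 0 := d.succ_ne_zero
  have hjle : ∀ n, j 0 ≤ j n := fun n => hj.monotone n.zero_le
  have hk : (0 : ℝ) < d + 1 := by positivity
  have hφcont : ContinuousOn φ (Ioo 0 (j 0)) :=
    (continuousOn_const.sub (continuousOn_const.mul
      ((continuousOn_tsum_pow_div_sub_pow hc hjle hsum).mono Ioo_subset_Ico_self))).congr hφ
  have hφanti : StrictAntiOn φ (Ioo 0 (j 0)) := fun x hx y hy hxy => by
    rw [hφ x hx, hφ y hy]
    exact sub_lt_sub_left (mul_lt_mul_of_pos_left (strictMonoOn_tsum_pow_div_sub_pow hc hjle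
      hsum (Ioo_subset_Ico_self hx) (Ioo_subset_Ico_self hy) hxy) hk) 1
  have hφle : ∀ r ∈ Ioo 0 (j 0), φ r ≤ 2 := fun r hr => by
    rw [hφ r hr]
    nlinarith [tsum_pow_div_sub_pow_pos hc hjle hsum hr]
  refine ⟨(((hφcont.pow 2).sub (continuousOn_const.mul hφcont)).add continuousOn_const).congr hu,
    fun x hx y hy hxy => ?_⟩
  rw [hu x hx, hu y hy]
  exact strictMonoOn_sq_sub_four_mul_add_two hφanti hφle hx hy hxy

theorem stmt_1 (d : ℕ) (hd : 1 ≤ d) (j : ℕ → ℝ) (hj : StrictMono j)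
    (hjpos : ∀ n, 0 < j n) (hsum : Summable fun n => ((j n) ^ (d + 1))⁻¹)
    (φ u : ℝ → ℝ)
    (hφ : ∀ r ∈ Set.Ioo (0 : ℝ) (j 0),
      φ r = 1 - ((d : ℝ) + 1) * ∑' n, r ^ (d + 1) / ((j n) ^ (d + 1) - r ^ (d + 1)))
    (hu : ∀ r ∈ Set.Ioo (0 : ℝ) (j 0), u r = (φ r) ^ 2 - 4 * φ r + 2) :
    ContinuousOn u (Set.Ioo (0 : ℝ) (j 0)) ∧ StrictMonoOn u (Set.Ioo (0 : ℝ) (j 0)) :=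
  stmt_1_general d j hj hsum φ u hφ hu
end

section
/- Let $d \ge 1$ and let $(j_n)_{n\ge1}$ be a strictly increasing sequence of positive reals with $\sum_{n\ge1} j_n^{-(d+1)} < \infty$. Define $u(r) = \varphi(r)^2 - 4\varphi(r) + 2$ where $\varphi(r) = 1 - (d+1)\sum_{n\ge1} \frac{r^{d+1}}{j_n^{d+1} - r^{d+1}}$. Then $\lim_{r\to 0^+} u(r) = -1$ and $\lim_{r\to j_1^-} u(r) = +\infty$, and consequently $u$ has a unique zero in $(0, j_1)$. -/
open Filter Set Topology

theorem stmt_2 (d : ℕ) (hd : 1 ≤ d) (j : ℕ → ℝ) (hj : StrictMono j)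
    (hjpos : ∀ n, 0 < j n) (hsum : Summable fun n => ((j n) ^ (d + 1))⁻¹)
    (φ u : ℝ → ℝ)
    (hφ : ∀ r, φ r = 1 - ((d : ℝ) + 1) * ∑' n, r ^ (d + 1) / ((j n) ^ (d + 1) - r ^ (d + 1)))
    (hu : ∀ r, u r = (φ r) ^ 2 - 4 * φ r + 2) :
    Filter.Tendsto u (nhdsWithin 0 (Set.Ioi 0)) (nhds (-1)) ∧
    Filter.Tendsto u (nhdsWithin (j 0) (Set.Iio (j 0))) Filter.atTop ∧
    ∃! r, r ∈ Set.Ioo (0 : ℝ) (j 0) ∧ u r = 0 := by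
  have hj0 : 0 < j 0 := hjpos 0
  have hjle : ∀ n, j 0 ≤ j n := fun n => hj.monotone (Nat.zero_le n)
  set S : ℝ → ℝ := fun r => ∑' n, r ^ (d + 1) / ((j n) ^ (d + 1) - r ^ (d + 1)) with hS
  -- positivity of denominators
  have hden : ∀ r : ℝ, 0 ≤ r → r < j 0 → ∀ n, 0 < j n ^ (d + 1) - r ^ (d + 1) := by
    intro r hr0 hrj n
    have : r ^ (d + 1) < j n ^ (d + 1) :=
      pow_lt_pow_left₀ (lt_of_lt_of_le hrj (hjle n)) hr0 (Nat.succ_ne_zero d)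
    linarith
  -- bound for summability
  have hbound : ∀ r : ℝ, 0 ≤ r → r < j 0 → ∀ n,
      r ^ (d + 1) / (j n ^ (d + 1) - r ^ (d + 1)) ≤
        (r ^ (d + 1) * j 0 ^ (d + 1) / (j 0 ^ (d + 1) - r ^ (d + 1))) * (j n ^ (d + 1))⁻¹ := by
    intro r hr0 hrj n
    have h1 := hden r hr0 hrj n
    have h0 := hden r hr0 hrj 0
    have hjn : (0:ℝ) < j n ^ (d + 1) := pow_pos (hjpos n) _
    have hle : j 0 ^ (d + 1) ≤ j n ^ (d + 1) := pow_le_pow_left₀ hj0.le (hjle n) _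
    rw [← div_eq_mul_inv, div_div, div_le_div_iff₀ h1 (by positivity)]
    have hrk : (0:ℝ) ≤ r ^ (d + 1) := pow_nonneg hr0 _
    nlinarith [mul_nonneg (mul_nonneg hrk hrk) (sub_nonneg.mpr hle)]
  have hnonneg : ∀ r : ℝ, 0 ≤ r → r < j 0 → ∀ n,
      0 ≤ r ^ (d + 1) / (j n ^ (d + 1) - r ^ (d + 1)) := fun r hr0 hrj n =>
    div_nonneg (pow_nonneg hr0 _) (hden r hr0 hrj n).le
  have hsummable : ∀ r : ℝ, 0 ≤ r → r < j 0 →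
      Summable (fun n => r ^ (d + 1) / (j n ^ (d + 1) - r ^ (d + 1))) := fun r hr0 hrj =>
    Summable.of_nonneg_of_le (hnonneg r hr0 hrj) (hbound r hr0 hrj) (hsum.mul_left _)
  -- continuity of S on initial segments
  have hScont : ∀ b : ℝ, 0 ≤ b → b < j 0 → ContinuousOn S (Set.Icc 0 b) := by
    intro b hb0 hbj
    apply continuousOn_tsum
      (u := fun n => (b ^ (d + 1) * j 0 ^ (d + 1) / (j 0 ^ (d + 1) - b ^ (d + 1))) * (j n ^ (d + 1))⁻¹)
    · intro n
      apply ContinuousOn.div (by fun_prop) (by fun_prop)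
      intro x hx
      exact (hden x hx.1 (lt_of_le_of_lt hx.2 hbj) n).ne'
    · exact hsum.mul_left _
    · intro n x hx
      have hx0 : (0:ℝ) ≤ x := hx.1
      have hxj : x < j 0 := lt_of_le_of_lt hx.2 hbj
      rw [Real.norm_eq_abs, abs_of_nonneg (hnonneg x hx0 hxj n)]
      calc x ^ (d + 1) / (j n ^ (d + 1) - x ^ (d + 1))
          ≤ b ^ (d + 1) / (j n ^ (d + 1) - b ^ (d + 1)) := by
            apply div_le_div₀ (pow_nonneg hb0 _) (pow_le_pow_left₀ hx0 hx.2 _)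
              (hden b hb0 hbj n)
            have := pow_le_pow_left₀ hx0 hx.2 (d + 1)
            linarith
        _ ≤ _ := hbound b hb0 hbj n
  -- strict monotonicity of S
  have hSmono : ∀ r s : ℝ, 0 ≤ r → r < s → s < j 0 → S r < S s := by
    intro r s hr0 hrs hsj
    have hs0 : (0:ℝ) ≤ s := le_trans hr0 hrs.le
    have hrj : r < j 0 := hrs.trans hsj
    apply Summable.tsum_lt_tsum_of_nonneg (i := 0) (hnonneg r hr0 hrj) ?_ ?_ (hsummable s hs0 hsj)
    · intro n
      apply div_le_div₀ (pow_nonneg hs0 _) (pow_le_pow_left₀ hr0 hrs.le _) (hden s hs0 hsj n)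
      have := pow_le_pow_left₀ hr0 hrs.le (d + 1)
      linarith
    · apply div_lt_div₀ (pow_lt_pow_left₀ hrs hr0 (Nat.succ_ne_zero d)) ?_
        (pow_nonneg hs0 _) (hden s hs0 hsj 0)
      have := pow_le_pow_left₀ hr0 hrs.le (d + 1)
      linarith
  have hS0 : S 0 = 0 := by
    simp [hS, zero_pow (Nat.succ_ne_zero d)]
  have hSnn : ∀ r, 0 ≤ r → r < j 0 → 0 ≤ S r := fun r hr0 hrj =>
    tsum_nonneg (hnonneg r hr0 hrj)
  have hSpos : ∀ r, 0 < r → r < j 0 → 0 < S r := by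
    intro r hr0 hrj
    have := hSmono 0 r le_rfl hr0 hrj
    rwa [hS0] at this
  -- φ values
  have hφle : ∀ r, 0 ≤ r → r < j 0 → φ r ≤ 1 := by
    intro r hr0 hrj
    rw [hφ r]
    have h1 : (0:ℝ) < (d:ℝ) + 1 := by positivity
    nlinarith [hSnn r hr0 hrj]
  -- u strictly monotone on [0, j 0)
  have humono : ∀ r s : ℝ, 0 ≤ r → r < s → s < j 0 → u r < u s := by
    intro r s hr0 hrs hsj
    have hs0 : (0:ℝ) ≤ s := le_trans hr0 hrs.le
    have hφrs : φ s < φ r := by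
      rw [hφ r, hφ s]
      have h1 : (0:ℝ) < (d:ℝ) + 1 := by positivity
      have := hSmono r s hr0 hrs hsj
      nlinarith
    have h1 : φ r ≤ 1 := hφle r hr0 (hrs.trans hsj)
    rw [hu r, hu s]
    nlinarith
  -- Part 1: limit at 0+
  have hb2 : j 0 / 2 < j 0 := by linarith
  have hb20 : (0:ℝ) ≤ j 0 / 2 := by linarith
  have hStend0 : Tendsto S (𝓝[>] 0) (𝓝 0) := by
    have hc : ContinuousWithinAt S (Set.Icc 0 (j 0 / 2)) 0 :=
      (hScont _ hb20 hb2) 0 ⟨le_rfl, hb20⟩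
    rw [ContinuousWithinAt, hS0] at hc
    exact hc.mono_left (nhdsWithin_le_iff.mpr (Icc_mem_nhdsGT (by linarith)))
  have hφtend0 : Tendsto φ (𝓝[>] 0) (𝓝 1) := by
    have : Tendsto (fun r => 1 - ((d:ℝ) + 1) * S r) (𝓝[>] 0) (𝓝 (1 - ((d:ℝ) + 1) * 0)) :=
      (tendsto_const_nhds.sub (tendsto_const_nhds.mul hStend0))
    simpa using this.congr (fun r => (hφ r).symm)
  have hpart1 : Tendsto u (𝓝[>] (0:ℝ)) (𝓝 (-1)) := by
    have : Tendsto (fun r => (φ r) ^ 2 - 4 * φ r + 2) (𝓝[>] 0) (𝓝 ((1:ℝ)^2 - 4*1 + 2)) := by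
      exact ((hφtend0.pow 2).sub (tendsto_const_nhds.mul hφtend0)).add tendsto_const_nhds
    have h2 : ((1:ℝ)^2 - 4*1 + 2) = -1 := by norm_num
    rw [h2] at this
    exact this.congr (fun r => (hu r).symm)
  -- Part 2: blow up at j 0
  have hmemIoo : Set.Ioo 0 (j 0) ∈ 𝓝[<] (j 0) := Ioo_mem_nhdsLT_of_mem ⟨hj0, le_rfl⟩
  have hdentend : Tendsto (fun r : ℝ => j 0 ^ (d + 1) - r ^ (d + 1)) (𝓝[<] (j 0)) (𝓝[>] 0) := by
    apply tendsto_nhdsWithin_of_tendsto_nhds_of_eventually_within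
    · have : Tendsto (fun r : ℝ => j 0 ^ (d + 1) - r ^ (d + 1)) (𝓝 (j 0))
          (𝓝 (j 0 ^ (d + 1) - j 0 ^ (d + 1))) :=
        tendsto_const_nhds.sub ((continuous_pow (d+1)).tendsto (j 0))
      simpa using this.mono_left nhdsWithin_le_nhds
    · filter_upwards [hmemIoo] with r hr
      exact hden r hr.1.le hr.2 0
  have ht0 : Tendsto (fun r : ℝ => r ^ (d + 1) / (j 0 ^ (d + 1) - r ^ (d + 1)))
      (𝓝[<] (j 0)) atTop := by
    simp_rw [div_eq_mul_inv]
    apply Filter.Tendsto.pos_mul_atTop (pow_pos hj0 (d+1))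
    · exact (((continuous_pow (d+1)).tendsto (j 0)).mono_left nhdsWithin_le_nhds)
    · exact hdentend.inv_tendsto_nhdsGT_zero
  have hStend : Tendsto S (𝓝[<] (j 0)) atTop := by
    apply tendsto_atTop_mono' _ _ ht0
    filter_upwards [hmemIoo] with r hr
    exact Summable.le_tsum (hsummable r hr.1.le hr.2) 0 (fun n _ => hnonneg r hr.1.le hr.2 n)
  have hφbot : Tendsto φ (𝓝[<] (j 0)) atBot := by
    have h1 : Tendsto (fun r => ((d:ℝ) + 1) * S r) (𝓝[<] (j 0)) atTop :=
      hStend.const_mul_atTop (by positivity)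
    have h2 : Tendsto (fun r => 1 - ((d:ℝ) + 1) * S r) (𝓝[<] (j 0)) atBot := by
      apply tendsto_atBot_add_const_left _ 1
      exact tendsto_neg_atBot_iff.mpr h1
    exact h2.congr (fun r => (hφ r).symm)
  have hpart2 : Tendsto u (𝓝[<] (j 0)) atTop := by
    apply tendsto_atTop_mono' _ _ (tendsto_neg_atTop_iff.mpr hφbot)
    filter_upwards [hφbot.eventually_le_atBot 0] with r hr
    rw [hu r]
    nlinarith
  refine ⟨hpart1, hpart2, ?_⟩
  -- existence of a zero
  obtain ⟨a, ha, hua⟩ : ∃ a, a ∈ Set.Ioo 0 (j 0) ∧ u a < 0 := by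
    have h1 : ∀ᶠ r in 𝓝[>] (0:ℝ), u r < 0 := hpart1.eventually (eventually_lt_nhds (by norm_num : (-1:ℝ) < 0))
    have h2 : Set.Ioo 0 (j 0) ∈ 𝓝[>] (0:ℝ) := Ioo_mem_nhdsGT_of_mem ⟨le_rfl, hj0⟩
    rcases (h1.and (eventually_of_mem h2 (fun x hx => hx))).exists with ⟨a, h, h'⟩
    exact ⟨a, h', h⟩
  obtain ⟨b, hb, hub⟩ : ∃ b, b ∈ Set.Ioo a (j 0) ∧ 0 < u b := by
    have h1 : ∀ᶠ r in 𝓝[<] (j 0), 0 < u r := hpart2.eventually_gt_atTop 0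
    have h2 : Set.Ioo a (j 0) ∈ 𝓝[<] (j 0) := Ioo_mem_nhdsLT_of_mem ⟨ha.2, le_rfl⟩
    rcases (h1.and (eventually_of_mem h2 (fun x hx => hx))).exists with ⟨b, h, h'⟩
    exact ⟨b, h', h⟩
  have hab : a < b := hb.1
  have hbj : b < j 0 := hb.2
  have hucont : ContinuousOn u (Set.Icc a b) := by
    have hSc : ContinuousOn S (Set.Icc a b) := by
      apply (hScont b (ha.1.le.trans hab.le) hbj).mono
      exact Set.Icc_subset_Icc ha.1.le le_rfl
    have hφc : ContinuousOn φ (Set.Icc a b) := by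
      have : ContinuousOn (fun r => 1 - ((d:ℝ) + 1) * S r) (Set.Icc a b) :=
        (continuousOn_const.sub (continuousOn_const.mul hSc))
      exact this.congr (fun r _ => hφ r)
    have : ContinuousOn (fun r => (φ r) ^ 2 - 4 * φ r + 2) (Set.Icc a b) :=
      ((hφc.pow 2).sub (continuousOn_const.mul hφc)).add continuousOn_const
    exact this.congr (fun r _ => hu r)
  obtain ⟨c, hc, huc⟩ : ∃ c ∈ Set.Ioo a b, u c = 0 := by
    have := intermediate_value_Ioo hab.le hucont
    have h0 : (0:ℝ) ∈ Set.Ioo (u a) (u b) := ⟨hua, hub⟩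
    rcases this h0 with ⟨c, hc, hc'⟩
    exact ⟨c, hc, hc'⟩
  have hcIoo : c ∈ Set.Ioo (0:ℝ) (j 0) := ⟨ha.1.trans hc.1, hc.2.trans hbj⟩
  refine ⟨c, ⟨hcIoo, huc⟩, ?_⟩
  rintro r ⟨hr, hur⟩
  by_contra hne
  rcases lt_or_gt_of_ne hne with h | h
  · have := humono r c hr.1.le h hcIoo.2
    rw [hur, huc] at this; exact lt_irrefl 0 this
  · have := humono c r hcIoo.1.le h hr.2
    rw [hur, huc] at this; exact lt_irrefl 0 this
end

section
/- Let $d \ge 1$, $(j_n)_{n\ge1}$ a strictly increasing sequence of positive reals with $\sum_{n\ge1} j_n^{-(d+1)} < \infty$, and suppose $z \in \mathbb{C}$ with $|z| = r < j_1$ satisfies $\varphi(r)^2 - 4\varphi(r) + 2 < 0$, where $\varphi(r) = 1 - (d+1)\sum_{n\ge1}\frac{r^{d+1}}{j_n^{d+1}-r^{d+1}}$. Then $|\Phi(z)^2 - 1| < 1$, where $\Phi(z) = 1 - (d+1)\sum_{n\ge1}\frac{z^{d+1}}{j_n^{d+1}-z^{d+1}}$. -/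
theorem stmt_4 (d : ℕ) (hd : 1 ≤ d) (j : ℕ → ℝ) (hj : StrictMono j)
    (hjpos : ∀ n, 0 < j n) (hsum : Summable fun n => ((j n) ^ (d + 1))⁻¹)
    (z : ℂ) (r : ℝ) (hr : ‖z‖ = r) (hrlt : r < j 0)
    (φ : ℝ → ℝ)
    (hφ : ∀ s : ℝ, φ s = 1 - ((d : ℝ) + 1) * ∑' n, s ^ (d + 1) / ((j n) ^ (d + 1) - s ^ (d + 1)))
    (hcond : (φ r) ^ 2 - 4 * φ r + 2 < 0)
    (Φ : ℂ → ℂ)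
    (hΦ : ∀ w : ℂ, ‖w‖ < j 0 →
      Φ w = 1 - ((d : ℂ) + 1) * ∑' n, w ^ (d + 1) / (((j n : ℂ)) ^ (d + 1) - w ^ (d + 1))) :
    ‖(Φ z) ^ 2 - 1‖ < 1 := by
  have hr0 : 0 ≤ r := hr ▸ norm_nonneg z
  have hjn : ∀ n, r < j n := fun n => lt_of_lt_of_le hrlt (hj.monotone (Nat.zero_le n))
  have hA : ∀ n, r ^ (d+1) < j n ^ (d+1) := fun n =>
    pow_lt_pow_left₀ (hjn n) hr0 (by omega)
  have hR0 : 0 ≤ r ^ (d+1) := pow_nonneg hr0 _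
  set g : ℕ → ℝ := fun n => r ^ (d+1) / (j n ^ (d+1) - r ^ (d+1)) with hgdef
  have hgpos : ∀ n, 0 < j n ^ (d+1) - r ^ (d+1) := fun n => sub_pos.2 (hA n)
  have hg0 : ∀ n, 0 ≤ g n := fun n => div_nonneg hR0 (hgpos n).le
  have hA0pos : 0 < j 0 ^ (d+1) := pow_pos (hjpos 0) _
  have hcpos : 0 < 1 - r ^ (d+1) / j 0 ^ (d+1) := by
    rw [sub_pos, div_lt_one hA0pos]; exact hA 0
  have hkey : ∀ n, (1 - r ^ (d+1) / j 0 ^ (d+1)) * j n ^ (d+1)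
      ≤ j n ^ (d+1) - r ^ (d+1) := by
    intro n
    have hle : j 0 ^ (d+1) ≤ j n ^ (d+1) :=
      pow_le_pow_left₀ (hjpos 0).le (hj.monotone (Nat.zero_le n)) _
    have h1 : r ^ (d+1) ≤ r ^ (d+1) / j 0 ^ (d+1) * j n ^ (d+1) := by
      rw [div_mul_eq_mul_div, le_div_iff₀ hA0pos]
      nlinarith
    nlinarith
  have hgsum : Summable g := by
    have hb : Summable (fun n =>
        (r ^ (d+1) / (1 - r ^ (d+1) / j 0 ^ (d+1))) * (j n ^ (d+1))⁻¹) :=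
      hsum.mul_left _
    refine Summable.of_nonneg_of_le hg0 (fun n => ?_) hb
    have hAn : 0 < j n ^ (d+1) := pow_pos (hjpos n) _
    have hc := hkey n
    have hclow : 0 < (1 - r ^ (d+1) / j 0 ^ (d+1)) * j n ^ (d+1) := mul_pos hcpos hAn
    calc g n = r ^ (d+1) / (j n ^ (d+1) - r ^ (d+1)) := rfl
      _ ≤ r ^ (d+1) / ((1 - r ^ (d+1) / j 0 ^ (d+1)) * j n ^ (d+1)) :=
          div_le_div_of_nonneg_left hR0 hclow hc
      _ = (r ^ (d+1) / (1 - r ^ (d+1) / j 0 ^ (d+1))) * (j n ^ (d+1))⁻¹ := by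
          field_simp
  set F : ℕ → ℂ := fun n => z ^ (d+1) / ((j n : ℂ) ^ (d+1) - z ^ (d+1)) with hFdef
  have hden : ∀ n, j n ^ (d+1) - r ^ (d+1)
      ≤ ‖(j n : ℂ) ^ (d+1) - z ^ (d+1)‖ := by
    intro n
    have h1 : ‖(j n : ℂ) ^ (d+1)‖ = j n ^ (d+1) := by
      rw [norm_pow, Complex.norm_real, Real.norm_eq_abs, abs_of_pos (hjpos n)]
    have h2 : ‖z ^ (d+1)‖ = r ^ (d+1) := by rw [norm_pow, hr]
    calc j n ^ (d+1) - r ^ (d+1)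
        = ‖(j n : ℂ) ^ (d+1)‖ - ‖z ^ (d+1)‖ := by rw [h1, h2]
      _ ≤ ‖(j n : ℂ) ^ (d+1) - z ^ (d+1)‖ := by
          simpa using
            norm_sub_norm_le ((j n : ℂ) ^ (d+1)) (z ^ (d+1))
  have habs : ∀ n, ‖F n‖ ≤ g n := by
    intro n
    have : ‖F n‖
        = r ^ (d+1) / ‖(j n : ℂ) ^ (d+1) - z ^ (d+1)‖ := by
      rw [hFdef]; simp [norm_div, norm_pow, hr]
    rw [this]
    exact div_le_div_of_nonneg_left hR0 (hgpos n) (hden n)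
  have hFsum : Summable F :=
    Summable.of_norm_bounded hgsum (fun n => by
      exact habs n)
  set S : ℂ := ∑' n, F n with hSdef
  set T : ℝ := ∑' n, g n with hTdef
  have hT0 : 0 ≤ T := tsum_nonneg hg0
  have hSle : ‖S‖ ≤ T := by
    calc ‖S‖ ≤ ∑' n, ‖F n‖ := by
          simpa using norm_tsum_le_tsum_norm
            (Summable.of_nonneg_of_le (fun n => norm_nonneg (F n))
              (fun n => by exact habs n) hgsum)
      _ ≤ T := Summable.tsum_le_tsum habs
            (Summable.of_nonneg_of_le (fun n => norm_nonneg (F n)) habs hgsum)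
            hgsum
  -- the real condition
  set u : ℝ := ((d : ℝ) + 1) * T with hudef
  have hu0 : 0 ≤ u := mul_nonneg (by positivity) hT0
  have hult : u ^ 2 + 2 * u < 1 := by
    have h := hcond
    rw [hφ r] at h
    have : φ r = 1 - u := by rw [hφ r]
    nlinarith [h]
  -- complex side
  have hΦz : Φ z = 1 - ((d : ℂ) + 1) * S := by
    rw [hΦ z (by rw [hr]; exact hrlt)]
  have key : (Φ z) ^ 2 - 1 = (((d : ℂ) + 1) * S) * ((((d : ℂ) + 1) * S) - 2) := by
    rw [hΦz]; ring
  have hUle : ‖((d : ℂ) + 1) * S‖ ≤ u := by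
    rw [norm_mul]
    have h1 : ‖(d : ℂ) + 1‖ = (d : ℝ) + 1 := by
      have : ((d : ℂ) + 1) = (((d : ℝ) + 1 : ℝ) : ℂ) := by push_cast; ring
      rw [this, Complex.norm_real, Real.norm_eq_abs, abs_of_nonneg (by positivity)]
    rw [h1, hudef]
    exact mul_le_mul_of_nonneg_left hSle (by positivity)
  have hU2 : ‖(((d : ℂ) + 1) * S) - 2‖ ≤ u + 2 := by
    calc ‖(((d : ℂ) + 1) * S) - 2‖
        ≤ ‖((d : ℂ) + 1) * S‖ + ‖(2 : ℂ)‖ := by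
          simpa using norm_sub_le (((d : ℂ) + 1) * S) 2
      _ ≤ u + 2 := by
          have : ‖(2 : ℂ)‖ = 2 := by norm_num
          rw [this]; linarith
  rw [key, norm_mul]
  calc ‖((d : ℂ) + 1) * S‖ * ‖(((d : ℂ) + 1) * S) - 2‖
      ≤ u * (u + 2) := mul_le_mul hUle hU2 (norm_nonneg _) hu0
    _ < 1 := by nlinarith
end

section
/- Let $d \ge 1$ and let $(\gamma_n)_{n\ge1}$ be a strictly increasing sequence of positive reals with $\sum_{n\ge1}\gamma_n^{-(d+1)} < \infty$. Define, for $r\in(0,\gamma_1)$, $\psi(r) = -(d+1)\sum_{n\ge1}\frac{r^{d+1}}{\gamma_n^{d+1}-r^{d+1}}$ and $v(r) = \psi(r)^2 - 2\psi(r) - 1$. Then $v$ is continuous and strictly increasing on $(0,\gamma_1)$, $\lim_{r\to 0^+} v(r) = -1$, $\lim_{r\to\gamma_1^-} v(r) = +\infty$, and hence $v$ has a unique zero in $(0,\gamma_1)$. -/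
open Set Filter

theorem stmt_6 (d : ℕ) (hd : 1 ≤ d) (γ : ℕ → ℝ) (hγ : StrictMono γ)
    (hγpos : ∀ n, 0 < γ n) (hsum : Summable fun n => ((γ n) ^ (d + 1))⁻¹)
    (ψ v : ℝ → ℝ)
    (hψ : ∀ r, ψ r = -(((d : ℝ) + 1) * ∑' n, r ^ (d + 1) / ((γ n) ^ (d + 1) - r ^ (d + 1))))
    (hv : ∀ r, v r = (ψ r) ^ 2 - 2 * ψ r - 1) :
    ContinuousOn v (Set.Ioo (0 : ℝ) (γ 0)) ∧ StrictMonoOn v (Set.Ioo (0 : ℝ) (γ 0)) ∧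
    Filter.Tendsto v (nhdsWithin 0 (Set.Ioi 0)) (nhds (-1)) ∧
    Filter.Tendsto v (nhdsWithin (γ 0) (Set.Iio (γ 0))) Filter.atTop ∧
    ∃! r, r ∈ Set.Ioo (0 : ℝ) (γ 0) ∧ v r = 0 := by
  set k := d + 1 with hkdef
  have hkne : k ≠ 0 := Nat.succ_ne_zero d
  have hγ0 : 0 < γ 0 := hγpos 0
  have hγle : ∀ n, γ 0 ≤ γ n := fun n => hγ.monotone (Nat.zero_le n)
  set g : ℝ → ℕ → ℝ := fun r n => r ^ k / ((γ n) ^ k - r ^ k) with hgdef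
  -- denominator positivity
  have hden : ∀ r, 0 ≤ r → r < γ 0 → ∀ n, 0 < (γ n) ^ k - r ^ k := by
    intro r hr hrγ n
    have h1 : r ^ k < (γ 0) ^ k := pow_lt_pow_left₀ hrγ hr hkne
    have h2 : (γ 0) ^ k ≤ (γ n) ^ k := pow_le_pow_left₀ hγ0.le (hγle n) k
    linarith
  have hgnonneg : ∀ r, 0 ≤ r → r < γ 0 → ∀ n, 0 ≤ g r n := fun r hr hrγ n =>
    div_nonneg (pow_nonneg hr k) (hden r hr hrγ n).le
  -- monotone bound on terms
  have hgle : ∀ r s, 0 ≤ r → r ≤ s → s < γ 0 → ∀ n, g r n ≤ g s n := by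
    intro r s hr hrs hsγ n
    have hs : 0 ≤ s := hr.trans hrs
    have h1 : r ^ k ≤ s ^ k := pow_le_pow_left₀ hr hrs k
    have h2 : 0 < (γ n) ^ k - s ^ k := hden s hs hsγ n
    exact div_le_div₀ (pow_nonneg hs k) h1 h2 (by linarith)
  have hglt : ∀ r s, 0 ≤ r → r < s → s < γ 0 → g r 0 < g s 0 := by
    intro r s hr hrs hsγ
    have hs : 0 ≤ s := hr.trans hrs.le
    have h1 : r ^ k < s ^ k := pow_lt_pow_left₀ hrs hr hkne
    have h2 : 0 < (γ 0) ^ k - s ^ k := hden s hs hsγ 0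
    exact div_lt_div₀ h1 (by linarith) (pow_nonneg hs k) h2
  -- dominating summable bound
  have hbound : ∀ r, 0 ≤ r → r < γ 0 → ∀ n,
      g r n ≤ (r ^ k / (1 - (r / γ 0) ^ k)) * ((γ n) ^ k)⁻¹ := by
    intro r hr hrγ n
    have hc : (r / γ 0) ^ k < 1 := by
      apply pow_lt_one₀ (div_nonneg hr hγ0.le) _ hkne
      exact (div_lt_one hγ0).2 hrγ
    have hcnn : 0 ≤ (r / γ 0) ^ k := pow_nonneg (div_nonneg hr hγ0.le) k
    have hγnk : 0 < (γ n) ^ k := pow_pos (hγpos n) k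
    have hrk : r ^ k = (r / γ 0) ^ k * (γ 0) ^ k := by
      rw [div_pow]; field_simp
    have h2 : (1 - (r / γ 0) ^ k) * (γ n) ^ k ≤ (γ n) ^ k - r ^ k := by
      have : (r / γ 0) ^ k * (γ 0) ^ k ≤ (r / γ 0) ^ k * (γ n) ^ k :=
        mul_le_mul_of_nonneg_left (pow_le_pow_left₀ hγ0.le (hγle n) k) hcnn
      nlinarith
    have h3 : 0 < (1 - (r / γ 0) ^ k) * (γ n) ^ k := mul_pos (by linarith) hγnk
    calc g r n ≤ r ^ k / ((1 - (r / γ 0) ^ k) * (γ n) ^ k) :=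
          div_le_div_of_nonneg_left (pow_nonneg hr k) h3 h2
      _ = (r ^ k / (1 - (r / γ 0) ^ k)) * ((γ n) ^ k)⁻¹ := by
          rw [div_mul_eq_div_div]; ring
  have hsumg : ∀ r, 0 ≤ r → r < γ 0 → Summable (g r) := by
    intro r hr hrγ
    exact Summable.of_nonneg_of_le (hgnonneg r hr hrγ) (hbound r hr hrγ)
      (hsum.mul_left _)
  -- ψ in terms of g
  have hψg : ∀ r, ψ r = -(((d : ℝ) + 1) * ∑' n, g r n) := hψ
  have hψ0 : ψ 0 = 0 := by
    rw [hψ 0]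
    have : ∀ n : ℕ, (0:ℝ) ^ k / ((γ n) ^ k - (0:ℝ) ^ k) = 0 := by
      intro n; rw [zero_pow hkne]; simp
    simp [this]
  have hψnonpos : ∀ r, 0 ≤ r → r < γ 0 → ψ r ≤ 0 := by
    intro r hr hrγ
    rw [hψg r]
    have : 0 ≤ ∑' n, g r n := tsum_nonneg (hgnonneg r hr hrγ)
    have hd1 : (0:ℝ) ≤ (d:ℝ) + 1 := by positivity
    nlinarith
  have hψneg : ∀ r, 0 < r → r < γ 0 → ψ r < 0 := by
    intro r hr hrγ
    rw [hψg r]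
    have h0 : 0 < g r 0 := div_pos (pow_pos hr k) (hden r hr.le hrγ 0)
    have : 0 < ∑' n, g r n := Summable.tsum_pos (hsumg r hr.le hrγ) (hgnonneg r hr.le hrγ) 0 h0
    have hd1 : (0:ℝ) < (d:ℝ) + 1 := by positivity
    nlinarith
  -- strict antitonicity of ψ
  have hψanti : ∀ r s, 0 ≤ r → r < s → s < γ 0 → ψ s < ψ r := by
    intro r s hr hrs hsγ
    rw [hψg r, hψg s]
    have hT : ∑' n, g r n < ∑' n, g s n :=
      Summable.tsum_lt_tsum (fun n => hgle r s hr hrs.le hsγ n) (hglt r s hr hrs hsγ)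
        (hsumg r hr (hrs.trans hsγ)) (hsumg s (hr.trans hrs.le) hsγ)
    have hd1 : (0:ℝ) < (d:ℝ) + 1 := by positivity
    nlinarith
  -- continuity of ψ on Icc 0 a
  have hψcont : ∀ a, 0 ≤ a → a < γ 0 → ContinuousOn ψ (Icc 0 a) := by
    intro a ha haγ
    have hT : ContinuousOn (fun r => ∑' n, g r n) (Icc 0 a) := by
      apply continuousOn_tsum (u := fun n => (a ^ k / (1 - (a / γ 0) ^ k)) * ((γ n) ^ k)⁻¹)
      · intro n
        apply ContinuousOn.div (continuous_pow k).continuousOn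
          (continuousOn_const.sub (continuous_pow k).continuousOn)
        intro x hx
        exact (hden x hx.1 (lt_of_le_of_lt hx.2 haγ) n).ne'
      · exact hsum.mul_left _
      · intro n x hx
        have hx1 : 0 ≤ x := hx.1
        have hxγ : x < γ 0 := lt_of_le_of_lt hx.2 haγ
        rw [Real.norm_eq_abs, abs_of_nonneg (hgnonneg x hx1 hxγ n)]
        exact (hgle x a hx1 hx.2 haγ n).trans (hbound a ha haγ n)
    have : ContinuousOn (fun r => -(((d : ℝ) + 1) * ∑' n, g r n)) (Icc 0 a) :=
      (hT.const_smul ((d:ℝ)+1)).neg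
    exact this.congr fun x _ => hψg x
  have hvcont : ∀ a, 0 ≤ a → a < γ 0 → ContinuousOn v (Icc 0 a) := by
    intro a ha haγ
    have h := hψcont a ha haγ
    have : ContinuousOn (fun r => (ψ r) ^ 2 - 2 * ψ r - 1) (Icc 0 a) :=
      (((h.pow 2).sub (continuousOn_const.mul h)).sub continuousOn_const)
    exact this.congr fun x _ => hv x
  -- part 1: continuity on Ioo
  have part1 : ContinuousOn v (Ioo (0 : ℝ) (γ 0)) := by
    intro x hx
    set a := (x + γ 0) / 2 with hadef
    have hxa : x < a := by simp only [hadef]; linarith [hx.2]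
    have haγ : a < γ 0 := by simp only [hadef]; linarith [hx.2]
    have ha0 : 0 ≤ a := by simp only [hadef]; linarith [hx.1]
    have hcw : ContinuousWithinAt v (Icc 0 a) x :=
      (hvcont a ha0 haγ) x ⟨hx.1.le, hxa.le⟩
    apply hcw.mono_of_mem_nhdsWithin
    apply Filter.mem_of_superset (inter_mem_nhdsWithin _ (Iio_mem_nhds hxa))
    rintro y ⟨hy1, hy2⟩
    exact ⟨hy1.1.le, le_of_lt hy2⟩
  -- part 2: strict monotonicity
  have part2 : StrictMonoOn v (Ioo (0 : ℝ) (γ 0)) := by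
    intro r hr s hs hrs
    rw [hv r, hv s]
    have h1 : ψ s < ψ r := hψanti r s hr.1.le hrs hs.2
    have h2 : ψ r ≤ 0 := hψnonpos r hr.1.le hr.2
    nlinarith
  -- part 3: limit at 0
  have part3 : Tendsto v (nhdsWithin 0 (Ioi 0)) (nhds (-1)) := by
    have ha : (0:ℝ) < γ 0 / 2 := half_pos hγ0
    have hcw : ContinuousWithinAt v (Icc 0 (γ 0 / 2)) 0 :=
      (hvcont (γ 0 / 2) ha.le (half_lt_self hγ0)) 0 ⟨le_rfl, ha.le⟩
    have hv0 : v 0 = -1 := by rw [hv 0, hψ0]; ring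
    have := hcw.tendsto
    rw [hv0] at this
    exact this.mono_left (nhdsWithin_le_of_mem (Icc_mem_nhdsGT_of_mem ⟨le_rfl, ha⟩))
  -- part 4: limit at γ 0
  have part4 : Tendsto v (nhdsWithin (γ 0) (Iio (γ 0))) Filter.atTop := by
    set l := nhdsWithin (γ 0) (Iio (γ 0)) with hldef
    have hmem : Ioo (0:ℝ) (γ 0) ∈ l := by
      apply Filter.mem_of_superset (inter_mem_nhdsWithin _ (Ioi_mem_nhds hγ0))
      rintro y ⟨hy1, hy2⟩; exact ⟨hy2, hy1⟩
    -- g · 0 tends to atTop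
    have hnum : Tendsto (fun r : ℝ => r ^ k) l (nhds ((γ 0) ^ k)) :=
      ((continuous_pow k).tendsto _).mono_left nhdsWithin_le_nhds
    have hden0 : Tendsto (fun r : ℝ => (γ 0) ^ k - r ^ k) l (nhdsWithin 0 (Ioi 0)) := by
      rw [tendsto_nhdsWithin_iff]
      constructor
      · have : Tendsto (fun r : ℝ => (γ 0) ^ k - r ^ k) l (nhds ((γ 0) ^ k - (γ 0) ^ k)) :=
          (tendsto_const_nhds.sub hnum)
        simpa using this
      · filter_upwards [hmem] with r hr
        exact hden r hr.1.le hr.2 0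
    have hg0 : Tendsto (fun r => g r 0) l Filter.atTop := by
      have := Filter.Tendsto.pos_mul_atTop (pow_pos hγ0 k) hnum hden0.inv_tendsto_nhdsGT_zero
      refine this.congr fun r => ?_
      simp [hgdef, div_eq_mul_inv]
    have hineq : ∀ᶠ r in l, 2 * g r 0 - 1 ≤ v r := by
      filter_upwards [hmem] with r hr
      have hsg := hsumg r hr.1.le hr.2
      have hle : g r 0 ≤ ∑' n, g r n :=
        Summable.le_tsum hsg 0 fun j _ => hgnonneg r hr.1.le hr.2 j
      have hψle : ψ r ≤ -(g r 0) := by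
        rw [hψg r]
        have hd1 : (1:ℝ) ≤ (d:ℝ) + 1 := by
          have : (0:ℝ) ≤ (d:ℝ) := Nat.cast_nonneg d
          linarith
        have hg0nn : 0 ≤ g r 0 := hgnonneg r hr.1.le hr.2 0
        nlinarith [(tsum_nonneg (hgnonneg r hr.1.le hr.2) : 0 ≤ ∑' n, g r n)]
      rw [hv r]
      nlinarith [sq_nonneg (ψ r)]
    apply Filter.tendsto_atTop_mono' l hineq
    exact tendsto_atTop_add_const_right _ _ (hg0.const_mul_atTop two_pos)
  -- part 5: existence and uniqueness of zero
  refine ⟨part1, part2, part3, part4, ?_⟩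
  -- find r1 with v r1 < 0
  have hmem1 : Ioo (0:ℝ) (γ 0) ∈ nhdsWithin (0:ℝ) (Ioi 0) := by
    apply Filter.mem_of_superset (inter_mem_nhdsWithin _ (Iio_mem_nhds hγ0))
    rintro y ⟨hy1, hy2⟩; exact ⟨hy1, hy2⟩
  have hneg : ∀ᶠ r in nhdsWithin (0:ℝ) (Ioi 0), v r < 0 :=
    part3.eventually_lt_const (by norm_num)
  obtain ⟨r1, hr1neg, hr1mem⟩ := (hneg.and hmem1).exists
  -- find r2 > r1 with v r2 > 0
  have hmem2 : Ioo (0:ℝ) (γ 0) ∈ nhdsWithin (γ 0) (Iio (γ 0)) := by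
    apply Filter.mem_of_superset (inter_mem_nhdsWithin _ (Ioi_mem_nhds hγ0))
    rintro y ⟨hy1, hy2⟩; exact ⟨hy2, hy1⟩
  have hmem3 : Ioi r1 ∈ nhdsWithin (γ 0) (Iio (γ 0)) :=
    nhdsWithin_le_nhds (Ioi_mem_nhds hr1mem.2)
  have hpos : ∀ᶠ r in nhdsWithin (γ 0) (Iio (γ 0)), 0 < v r :=
    part4.eventually_gt_atTop 0
  obtain ⟨r2, ⟨hr2pos, hr2mem⟩, hr12⟩ := ((hpos.and hmem2).and hmem3).exists
  have hsub : Icc r1 r2 ⊆ Ioo (0:ℝ) (γ 0) := fun y hy =>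
    ⟨lt_of_lt_of_le hr1mem.1 hy.1, lt_of_le_of_lt hy.2 hr2mem.2⟩
  have hivt := intermediate_value_Icc (le_of_lt hr12) (part1.mono hsub)
  have h0mem : (0:ℝ) ∈ Icc (v r1) (v r2) := ⟨hr1neg.le, hr2pos.le⟩
  obtain ⟨c, hcmem, hvc⟩ := hivt h0mem
  refine ⟨c, ⟨hsub hcmem, hvc⟩, ?_⟩
  rintro y ⟨hy, hvy⟩
  exact part2.injOn hy (hsub hcmem) (by rw [hvy, hvc])
end

section
/- Let $d\ge1$, $-1 \le B < A \le 1$, and let $(j_n)_{n\ge1}$ be strictly increasing positive reals with $\sum_{n\ge1} j_n^{-(d+1)} < \infty$. Suppose $r \in (0,j_1)$ satisfies $\varphi(r) > 1 - \frac{A-B}{1+|B|}$, where $\varphi(r) = 1 - (d+1)\sum_{n\ge1}\frac{r^{d+1}}{j_n^{d+1}-r^{d+1}}$. Then for all complex $z$ with $|z| \le r$, $\left|\frac{\Phi(z)-1}{A - B\,\Phi(z)}\right| < 1$, where $\Phi(z) = 1 - (d+1)\sum_{n\ge1}\frac{z^{d+1}}{j_n^{d+1}-z^{d+1}}$. -/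
/-!
Put `m = d + 1`. Termwise, `‖z^m / (j_n^m - z^m)‖ ≤ r^m / (j_n^m - r^m)` for `‖z‖ ≤ r`, so
`‖Φ z - 1‖ ≤ 1 - φ r =: t`, and the hypothesis on `φ r` reads `t (1 + |B|) < A - B`. Writing
`A - B Φ = (A - B) - B (Φ - 1)` gives `‖A - B Φ‖ ≥ (A - B) - |B| t > t ≥ ‖Φ - 1‖`.
-/

open Complex

theorem norm_sub_one_div_sub_mul_lt_one {w : ℂ} {A B t : ℝ} (hw : ‖w - 1‖ ≤ t)
    (ht : t * (1 + |B|) < A - B) : ‖(w - 1) / (A - B * w)‖ < 1 := by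
  have ht0 : 0 ≤ t := (norm_nonneg _).trans hw
  have hden : t < ‖(A : ℂ) - B * w‖ := by
    have hBw : ‖(B : ℂ) * (w - 1)‖ ≤ |B| * t := by
      rw [norm_mul, norm_real, Real.norm_eq_abs]
      exact mul_le_mul_of_nonneg_left hw (abs_nonneg B)
    have hAB : A - B ≤ ‖(A : ℂ) - B‖ := by
      rw [← ofReal_sub, norm_real, Real.norm_eq_abs]
      exact le_abs_self _
    calc t < (A - B) - |B| * t := by nlinarith
      _ ≤ ‖(A : ℂ) - B‖ - ‖(B : ℂ) * (w - 1)‖ := by linarith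
      _ ≤ ‖((A : ℂ) - B) - B * (w - 1)‖ := norm_sub_norm_le _ _
      _ = ‖(A : ℂ) - B * w‖ := by ring_nf
  rw [norm_div, div_lt_one (ht0.trans_lt hden)]
  exact hw.trans_lt hden

theorem norm_div_sub_le {w : ℂ} {s a : ℝ} (hw : ‖w‖ ≤ s) (hsa : s < a) :
    ‖w / (a - w)‖ ≤ s / (a - s) := by
  have hden : a - s ≤ ‖(a : ℂ) - w‖ := by
    have := norm_sub_norm_le (a : ℂ) w
    rw [norm_real, Real.norm_eq_abs] at this
    linarith [le_abs_self a]
  rw [norm_div]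
  exact div_le_div₀ ((norm_nonneg _).trans hw) hw (sub_pos.mpr hsa) hden

theorem summable_div_sub_of_summable_inv {a : ℕ → ℝ} {s : ℝ} (ha : Monotone a) (hs : 0 ≤ s)
    (hsa : s < a 0) (hsum : Summable fun n => (a n)⁻¹) :
    Summable fun n => s / (a n - s) := by
  have hδ : 0 < a 0 - s := sub_pos.mpr hsa
  refine Summable.of_nonneg_of_le (fun n => div_nonneg hs (by linarith [ha (Nat.zero_le n)]))
    (fun n => ?_) (hsum.mul_left (s * a 0 / (a 0 - s)))
  have h0n : a 0 ≤ a n := ha (Nat.zero_le n)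
  have han : 0 < a n := by linarith
  -- `a n - s ≥ a n (a 0 - s) / a 0` because `s a 0 ≤ s a n`.
  rw [← div_eq_mul_inv, div_le_div_iff₀ (by linarith) han, div_mul_eq_mul_div, le_div_iff₀ hδ]
  nlinarith [mul_le_mul_of_nonneg_left h0n hs]

theorem norm_tsum_pow_div_sub_pow_le {j : ℕ → ℝ} {r : ℝ} {z : ℂ} (m : ℕ) (hm : m ≠ 0)
    (hj : Monotone j) (hr : 0 < r) (hrj : r < j 0) (hsum : Summable fun n => (j n ^ m)⁻¹)
    (hz : ‖z‖ ≤ r) :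
    ‖∑' n, z ^ m / ((j n : ℂ) ^ m - z ^ m)‖ ≤ ∑' n, r ^ m / (j n ^ m - r ^ m) := by
  have hjr (n : ℕ) : r ^ m < j n ^ m :=
    pow_lt_pow_left₀ (hrj.trans_le (hj (Nat.zero_le n))) hr.le hm
  have hjm : Monotone fun n => j n ^ m := fun k l hkl =>
    pow_le_pow_left₀ (hr.le.trans (hrj.le.trans (hj (Nat.zero_le k)))) (hj hkl) m
  refine tsum_of_norm_bounded
    (summable_div_sub_of_summable_inv hjm (by positivity) (hjr 0) hsum).hasSum fun n => ?_
  have hzm : ‖z ^ m‖ ≤ r ^ m := by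
    rw [norm_pow]
    exact pow_le_pow_left₀ (norm_nonneg z) hz m
  simpa only [ofReal_pow] using norm_div_sub_le hzm (hjr n)

theorem stmt_10_general (d : ℕ) (A B : ℝ)
    (j : ℕ → ℝ) (hj : StrictMono j)
    (hsum : Summable fun n => ((j n) ^ (d + 1))⁻¹)
    (φ : ℝ → ℝ)
    (hφ : ∀ s : ℝ, φ s = 1 - ((d : ℝ) + 1) * ∑' n, s ^ (d + 1) / ((j n) ^ (d + 1) - s ^ (d + 1)))
    (r : ℝ) (hr : r ∈ Set.Ioo (0 : ℝ) (j 0))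
    (hcond : φ r > 1 - (A - B) / (1 + |B|))
    (Φ : ℂ → ℂ)
    (hΦ : ∀ w : ℂ, ‖w‖ < j 0 →
      Φ w = 1 - ((d : ℂ) + 1) * ∑' n, w ^ (d + 1) / (((j n : ℂ)) ^ (d + 1) - w ^ (d + 1))) :
    ∀ z : ℂ, ‖z‖ ≤ r →
      ‖(Φ z - 1) / ((A : ℂ) - (B : ℂ) * Φ z)‖ < 1 := by
  intro z hz
  obtain ⟨hr0, hrj⟩ := hr
  have hΦ_sub_one : ‖Φ z - 1‖ ≤ 1 - φ r := by
    rw [hΦ z (hz.trans_lt hrj), hφ r, sub_sub_cancel_left, norm_neg, norm_mul,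
      sub_sub_cancel, ← Nat.cast_succ, Complex.norm_natCast, Nat.cast_succ]
    exact mul_le_mul_of_nonneg_left
      (norm_tsum_pow_div_sub_pow_le (d + 1) d.succ_ne_zero hj.monotone hr0 hrj hsum hz)
      (by positivity)
  refine norm_sub_one_div_sub_mul_lt_one hΦ_sub_one ?_
  rw [gt_iff_lt, sub_lt_comm] at hcond
  exact (lt_div_iff₀ (by positivity)).mp hcond

theorem stmt_10 (d : ℕ) (hd : 1 ≤ d) (A B : ℝ) (hB : -1 ≤ B) (hBA : B < A) (hA : A ≤ 1)
    (j : ℕ → ℝ) (hj : StrictMono j) (hjpos : ∀ n, 0 < j n)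
    (hsum : Summable fun n => ((j n) ^ (d + 1))⁻¹)
    (φ : ℝ → ℝ)
    (hφ : ∀ s : ℝ, φ s = 1 - ((d : ℝ) + 1) * ∑' n, s ^ (d + 1) / ((j n) ^ (d + 1) - s ^ (d + 1)))
    (r : ℝ) (hr : r ∈ Set.Ioo (0 : ℝ) (j 0))
    (hcond : φ r > 1 - (A - B) / (1 + |B|))
    (Φ : ℂ → ℂ)
    (hΦ : ∀ w : ℂ, ‖w‖ < j 0 →
      Φ w = 1 - ((d : ℂ) + 1) * ∑' n, w ^ (d + 1) / (((j n : ℂ)) ^ (d + 1) - w ^ (d + 1))) :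
    ∀ z : ℂ, ‖z‖ ≤ r →
      ‖(Φ z - 1) / ((A : ℂ) - (B : ℂ) * Φ z)‖ < 1 :=
  stmt_10_general d A B j hj hsum φ hφ r hr hcond Φ hΦ
end

section
/- Let $d\ge1$, $-1 \le B < A \le 1$, and let $(\gamma_n)_{n\ge1}$ be strictly increasing positive reals with $\sum_{n\ge1}\gamma_n^{-(d+1)} < \infty$. Define, for $r\in(0,\gamma_1)$, $\psi(r) = -(d+1)\sum_{n\ge1}\frac{r^{d+1}}{\gamma_n^{d+1}-r^{d+1}}$ and $v(r) = \psi(r) + \frac{A-B}{1+|B|}$. Then $v$ is strictly decreasing on $(0,\gamma_1)$, $\lim_{r\to 0^+} v(r) = \frac{A-B}{1+|B|} > 0$, $\lim_{r\to\gamma_1^-} v(r) = -\infty$, and hence $v$ has a unique zero in $(0,\gamma_1)$. -/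
open Filter Set Topology

/-!
Put `a n = γ n ^ (d + 1)` and `x = r ^ (d + 1)`, so that `ψ r = -(d + 1) * ∑ x / (a n - x)`.
Each term is increasing in `x` on `[0, a 0)`, and for `x ≤ b < a 0` it is at most
`b * a 0 / (a 0 - b) * (a n)⁻¹`, because `a n - b ≥ a n * (a 0 - b) / a 0`. So the series
converges locally uniformly on `[0, a 0)`: its sum is continuous, strictly increasing and zero
at `0`, and it tends to `+∞` as `x → a 0⁻` because its first term does. Hence `v` is continuous
and strictly decreasing, with limits `(A - B) / (1 + |B|) > 0` and `-∞` at the endpoints, and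
the intermediate value theorem gives the zero.
-/

theorem existsUnique_zero_of_strictAntiOn {f : ℝ → ℝ} {a b L : ℝ} (hab : a < b)
    (hmono : StrictAntiOn f (Ioo a b)) (hcont : ContinuousOn f (Ioo a b))
    (ha : Tendsto f (𝓝[>] a) (𝓝 L)) (hL : 0 < L) (hb : Tendsto f (𝓝[<] b) atBot) :
    ∃! x, x ∈ Ioo a b ∧ f x = 0 := by
  obtain ⟨x, hx, hfx⟩ := isPreconnected_Ioo.intermediate_value_Iio
    (le_principal_iff.2 (Ioo_mem_nhdsLT hab)) (le_principal_iff.2 (Ioo_mem_nhdsGT hab))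
    hcont hb ha hL
  exact ⟨x, ⟨hx, hfx⟩, fun y hy => hmono.injOn hy.1 hx (hy.2.trans hfx.symm)⟩

noncomputable def poleSum (a : ℕ → ℝ) (x : ℝ) : ℝ := ∑' n, x / (a n - x)

section poleSum

variable {a : ℕ → ℝ}

@[simp] theorem poleSum_zero : poleSum a 0 = 0 := by simp [poleSum]

theorem poleSum_term_le (ha : ∀ n, a 0 ≤ a n) {x b : ℝ} (hx : 0 ≤ x) (hxb : x ≤ b)
    (hb : b < a 0) (n : ℕ) : x / (a n - x) ≤ b * a 0 / (a 0 - b) * (a n)⁻¹ := by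
  have hbn : b < a n := hb.trans_le (ha n)
  calc x / (a n - x) ≤ b / (a n - b) :=
        div_le_div₀ (hx.trans hxb) hxb (by linarith) (by linarith)
    _ ≤ b * a 0 / ((a 0 - b) * a n) := by
      rw [div_le_div_iff₀ (by linarith) (by nlinarith)]
      nlinarith [mul_le_mul_of_nonneg_left (ha n) (sq_nonneg b)]
    _ = b * a 0 / (a 0 - b) * (a n)⁻¹ := by rw [div_mul_eq_div_div, div_eq_mul_inv _ (a n)]

theorem poleSum_term_nonneg (ha : ∀ n, a 0 ≤ a n) {x : ℝ} (hx : 0 ≤ x) (hxa : x < a 0) (n : ℕ) :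
    0 ≤ x / (a n - x) :=
  div_nonneg hx (by linarith [ha n])

theorem summable_poleSum_term (ha : ∀ n, a 0 ≤ a n) (hsum : Summable fun n => (a n)⁻¹)
    {x : ℝ} (hx : 0 ≤ x) (hxa : x < a 0) : Summable fun n => x / (a n - x) :=
  (hsum.mul_left _).of_nonneg_of_le (poleSum_term_nonneg ha hx hxa)
    (poleSum_term_le ha hx le_rfl hxa)

theorem strictMonoOn_poleSum (ha : ∀ n, a 0 ≤ a n) (hsum : Summable fun n => (a n)⁻¹) :
    StrictMonoOn (poleSum a) (Ico 0 (a 0)) := by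
  intro x hx y hy hxy
  have hterm : ∀ n, x / (a n - x) < y / (a n - y) := fun n =>
    div_lt_div₀ hxy (by linarith) hy.1 (by linarith [hy.2, ha n])
  exact Summable.tsum_lt_tsum (fun n => (hterm n).le) (hterm 0)
    (summable_poleSum_term ha hsum hx.1 hx.2) (summable_poleSum_term ha hsum hy.1 hy.2)

theorem continuousOn_poleSum (ha : ∀ n, a 0 ≤ a n) (hsum : Summable fun n => (a n)⁻¹) :
    ContinuousOn (poleSum a) (Ico 0 (a 0)) := by
  have hloc : ∀ b < a 0, ContinuousOn (poleSum a) (Icc 0 b) := fun b hb =>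
    continuousOn_tsum (fun n => continuousOn_id.div (continuousOn_const.sub continuousOn_id)
        fun x hx => by linarith [hx.2, ha n])
      (hsum.mul_left _) fun n x hx => by
        rw [Real.norm_of_nonneg (poleSum_term_nonneg ha hx.1 (hx.2.trans_lt hb) n)]
        exact poleSum_term_le ha hx.1 hx.2 hb n
  intro x hx
  obtain ⟨b, hxb, hb⟩ := exists_between hx.2
  exact ((hloc b hb).continuousWithinAt ⟨hx.1, hxb.le⟩).mono_of_mem_nhdsWithin
    (mem_nhdsWithin.2 ⟨Iio b, isOpen_Iio, hxb, fun y hy => ⟨hy.2.1, hy.1.le⟩⟩)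

theorem tendsto_poleSum_nhdsLT (ha0 : 0 < a 0) (ha : ∀ n, a 0 ≤ a n)
    (hsum : Summable fun n => (a n)⁻¹) : Tendsto (poleSum a) (𝓝[<] a 0) atTop := by
  have hgap : Tendsto (fun x => a 0 - x) (𝓝[<] a 0) (𝓝[>] 0) := by
    refine tendsto_nhdsWithin_of_tendsto_nhds_of_eventually_within _ ?_
      (eventually_nhdsWithin_of_forall fun x (hx : x < a 0) => sub_pos.2 hx)
    simpa using (tendsto_const_nhds.sub tendsto_id : Tendsto (fun x => a 0 - x) (𝓝 (a 0)) _)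
      |>.mono_left nhdsWithin_le_nhds
  have hfirst : Tendsto (fun x => x / (a 0 - x)) (𝓝[<] a 0) atTop :=
    (tendsto_nhdsWithin_of_tendsto_nhds tendsto_id).pos_mul_atTop ha0
      (tendsto_inv_nhdsGT_zero.comp hgap)
  refine tendsto_atTop_mono' _ ?_ hfirst
  filter_upwards [Ioo_mem_nhdsLT ha0] with x hx
  exact (summable_poleSum_term ha hsum hx.1.le hx.2).le_tsum 0 fun n _ =>
    poleSum_term_nonneg ha hx.1.le hx.2 n

end poleSum

theorem mapsTo_pow_Ico {m : ℕ} (hm : m ≠ 0) (b : ℝ) : MapsTo (· ^ m) (Ico 0 b) (Ico 0 (b ^ m)) :=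
  fun _ hx => ⟨pow_nonneg hx.1 m, pow_lt_pow_left₀ hx.2 hx.1 hm⟩

theorem tendsto_pow_nhdsLT {m : ℕ} (hm : m ≠ 0) {b : ℝ} (hb : 0 < b) :
    Tendsto (· ^ m) (𝓝[<] b) (𝓝[<] (b ^ m)) :=
  tendsto_nhdsWithin_of_tendsto_nhds_of_eventually_within _
    (((continuous_pow m).tendsto b).mono_left nhdsWithin_le_nhds)
    (eventually_of_mem (Ioo_mem_nhdsLT hb) fun _ hx => pow_lt_pow_left₀ hx.2 hx.1.le hm)

theorem stmt_11_general (d : ℕ) (A B : ℝ) (hBA : B < A)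
    (γ : ℕ → ℝ) (hγ : StrictMono γ) (hγpos : ∀ n, 0 < γ n)
    (hsum : Summable fun n => ((γ n) ^ (d + 1))⁻¹)
    (ψ v : ℝ → ℝ)
    (hψ : ∀ r, ψ r = -(((d : ℝ) + 1) * ∑' n, r ^ (d + 1) / ((γ n) ^ (d + 1) - r ^ (d + 1))))
    (hv : ∀ r, v r = ψ r + (A - B) / (1 + |B|)) :
    StrictAntiOn v (Set.Ioo (0 : ℝ) (γ 0)) ∧
    Filter.Tendsto v (nhdsWithin 0 (Set.Ioi 0)) (nhds ((A - B) / (1 + |B|))) ∧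
    (A - B) / (1 + |B|) > 0 ∧
    Filter.Tendsto v (nhdsWithin (γ 0) (Set.Iio (γ 0))) Filter.atBot ∧
    ∃! r, r ∈ Set.Ioo (0 : ℝ) (γ 0) ∧ v r = 0 := by
  set c := (A - B) / (1 + |B|)
  have hc : 0 < c := div_pos (sub_pos.2 hBA) (by positivity)
  have hk : (0 : ℝ) < d + 1 := by positivity
  have hγ0 := hγpos 0
  have ha : ∀ n, γ 0 ^ (d + 1) ≤ γ n ^ (d + 1) :=
    fun n => pow_le_pow_left₀ hγ0.le (hγ.monotone n.zero_le) _
  set φ := fun r : ℝ => poleSum (fun n => γ n ^ (d + 1)) (r ^ (d + 1))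
  have hvφ : v = fun r => -((d + 1) * φ r) + c := funext fun r => by rw [hv, hψ]; rfl
  have hmaps := mapsTo_pow_Ico d.succ_ne_zero (γ 0)
  have hφmono : StrictMonoOn φ (Ico 0 (γ 0)) := (strictMonoOn_poleSum ha hsum).comp
    ((pow_left_strictMonoOn₀ d.succ_ne_zero).mono fun _ hx => hx.1) hmaps
  have hφcont : ContinuousOn φ (Ico 0 (γ 0)) :=
    (continuousOn_poleSum ha hsum).comp (continuous_pow _).continuousOn hmaps
  have hφ0 : Tendsto φ (𝓝[>] 0) (𝓝 0) := by
    simpa [φ] using (hφcont 0 ⟨le_rfl, hγ0⟩).tendsto.mono_left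
      (nhdsWithin_le_of_mem (mem_of_superset (Ioo_mem_nhdsGT hγ0) Ioo_subset_Ico_self))
  have hφtop : Tendsto φ (𝓝[<] γ 0) atTop :=
    (tendsto_poleSum_nhdsLT (pow_pos hγ0 (d + 1)) ha hsum).comp
      (tendsto_pow_nhdsLT d.succ_ne_zero hγ0)
  have hanti : StrictAntiOn v (Ioo 0 (γ 0)) := fun x hx y hy hxy => by
    simp only [hvφ]
    linarith [mul_lt_mul_of_pos_left (hφmono (Ioo_subset_Ico_self hx)
      (Ioo_subset_Ico_self hy) hxy) hk]
  have hlim0 : Tendsto v (𝓝[>] 0) (𝓝 c) := by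
    simpa [hvφ] using ((hφ0.const_mul ((d : ℝ) + 1)).neg.add_const c)
  have hlimγ : Tendsto v (𝓝[<] γ 0) atBot := hvφ ▸
    tendsto_atBot_add_const_right _ c (tendsto_neg_atTop_atBot.comp (hφtop.const_mul_atTop hk))
  have hcont : ContinuousOn v (Ioo 0 (γ 0)) := hvφ ▸
    ((continuousOn_const.mul hφcont).neg.add continuousOn_const).mono Ioo_subset_Ico_self
  exact ⟨hanti, hlim0, hc, hlimγ,
    existsUnique_zero_of_strictAntiOn hγ0 hanti hcont hlim0 hc hlimγ⟩

theorem stmt_11 (d : ℕ) (hd : 1 ≤ d) (A B : ℝ) (hB : -1 ≤ B) (hBA : B < A) (hA : A ≤ 1)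
    (γ : ℕ → ℝ) (hγ : StrictMono γ) (hγpos : ∀ n, 0 < γ n)
    (hsum : Summable fun n => ((γ n) ^ (d + 1))⁻¹)
    (ψ v : ℝ → ℝ)
    (hψ : ∀ r, ψ r = -(((d : ℝ) + 1) * ∑' n, r ^ (d + 1) / ((γ n) ^ (d + 1) - r ^ (d + 1))))
    (hv : ∀ r, v r = ψ r + (A - B) / (1 + |B|)) :
    StrictAntiOn v (Set.Ioo (0 : ℝ) (γ 0)) ∧
    Filter.Tendsto v (nhdsWithin 0 (Set.Ioi 0)) (nhds ((A - B) / (1 + |B|))) ∧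
    (A - B) / (1 + |B|) > 0 ∧
    Filter.Tendsto v (nhdsWithin (γ 0) (Set.Iio (γ 0))) Filter.atBot ∧
    ∃! r, r ∈ Set.Ioo (0 : ℝ) (γ 0) ∧ v r = 0 :=
  stmt_11_general d A B hBA γ hγ hγpos hsum ψ v hψ hv
end

section
/- Let $d\ge1$, $-1 \le B < A \le 1$, and let $(\gamma_n)_{n\ge1}$ be strictly increasing positive reals with $\sum_{n\ge1}\gamma_n^{-(d+1)} < \infty$. For complex $z$ with $|z| < \gamma_1$ set $\Psi(z) = -(d+1)\sum_{n\ge1}\frac{z^{d+1}}{\gamma_n^{d+1}-z^{d+1}}$. If $A - B + |B|\,\Psi(|z|) > 0$, then $\left|\frac{\Psi(z)}{A - B(1+\Psi(z))}\right| \le \frac{-\Psi(|z|)}{A - B + |B|\,\Psi(|z|)}$. -/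
/-!
On `|z| < γ₀` every term of `Ψ(z)` is dominated in modulus by the corresponding (nonnegative)
term of `-Ψ(|z|)`, since `|γₙ^k - z^k| ≥ γₙ^k - |z|^k > 0`; hence `|Ψ(z)| ≤ -Ψ(|z|)`.
The triangle inequality then bounds the denominator `A - B - BΨ(z)` from below by
`A - B + |B| Ψ(|z|)`.
-/

open Complex

lemma sub_pow_pos_of_lt {t r : ℝ} {k : ℕ} (hk : k ≠ 0) (hr : 0 ≤ r) (hrt : r < t) :
    0 < t ^ k - r ^ k :=
  sub_pos.mpr (pow_lt_pow_left₀ hrt hr hk)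

lemma norm_pow_div_pow_sub_pow_le {z : ℂ} {t : ℝ} {k : ℕ} (hk : k ≠ 0) (hz : ‖z‖ < t) :
    ‖z ^ k / ((t : ℂ) ^ k - z ^ k)‖ ≤ ‖z‖ ^ k / (t ^ k - ‖z‖ ^ k) := by
  have hden : t ^ k - ‖z‖ ^ k ≤ ‖(t : ℂ) ^ k - z ^ k‖ := by
    calc t ^ k - ‖z‖ ^ k = ‖(t : ℂ) ^ k‖ - ‖z ^ k‖ := by
          rw [norm_pow, norm_pow, norm_real, Real.norm_of_nonneg ((norm_nonneg z).trans hz.le)]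
      _ ≤ _ := norm_sub_norm_le _ _
  rw [norm_div, norm_pow]
  exact div_le_div_of_nonneg_left (by positivity)
    (sub_pow_pos_of_lt hk (norm_nonneg z) hz) hden

lemma div_sub_le_mul_div_sub_mul_inv {a b s : ℝ} (hs : 0 ≤ s) (hsa : s < a) (hab : a ≤ b) :
    s / (b - s) ≤ a * s / (a - s) * b⁻¹ := by
  rw [← div_eq_mul_inv, div_div, div_le_div_iff₀ (by linarith) (by nlinarith)]
  nlinarith [mul_nonneg (mul_nonneg hs hs) (sub_nonneg.2 hab)]

lemma summable_pow_div_pow_sub_pow {γ : ℕ → ℝ} {k : ℕ} {r : ℝ} (hγ : Monotone γ) (hk : k ≠ 0)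
    (hsum : Summable fun n => (γ n ^ k)⁻¹) (hr : 0 ≤ r) (hrγ : r < γ 0) :
    Summable fun n => r ^ k / (γ n ^ k - r ^ k) := by
  have hrγn (n : ℕ) : r < γ n := hrγ.trans_le (hγ n.zero_le)
  refine (hsum.mul_left (γ 0 ^ k * r ^ k / (γ 0 ^ k - r ^ k))).of_nonneg_of_le
    (fun n => div_nonneg (pow_nonneg hr k) (sub_pow_pos_of_lt hk hr (hrγn n)).le)
    fun n => div_sub_le_mul_div_sub_mul_inv (pow_nonneg hr k) (pow_lt_pow_left₀ hrγ hr hk)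
      (pow_le_pow_left₀ (hr.trans hrγ.le) (hγ n.zero_le) k)

lemma norm_tsum_pow_div_pow_sub_pow_le {γ : ℕ → ℝ} {k : ℕ} {z : ℂ} (hγ : Monotone γ)
    (hk : k ≠ 0) (hsum : Summable fun n => (γ n ^ k)⁻¹) (hz : ‖z‖ < γ 0) :
    ‖∑' n, z ^ k / ((γ n : ℂ) ^ k - z ^ k)‖ ≤ ∑' n, ‖z‖ ^ k / (γ n ^ k - ‖z‖ ^ k) :=
  tsum_of_norm_bounded (summable_pow_div_pow_sub_pow hγ hk hsum (norm_nonneg z) hz).hasSum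
    fun n => norm_pow_div_pow_sub_pow_le hk (hz.trans_le (hγ n.zero_le))

lemma norm_div_sub_mul_one_add_le {w : ℂ} {p A B : ℝ} (hw : ‖w‖ ≤ p)
    (hpos : 0 < A - B - |B| * p) :
    ‖w / ((A : ℂ) - B * (1 + w))‖ ≤ p / (A - B - |B| * p) := by
  have hden : A - B - |B| * p ≤ ‖(A : ℂ) - B * (1 + w)‖ :=
    calc A - B - |B| * p ≤ ‖((A - B : ℝ) : ℂ)‖ - ‖(B : ℂ) * w‖ := by
          rw [norm_mul, norm_real, norm_real, Real.norm_eq_abs, Real.norm_eq_abs]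
          gcongr
          exact le_abs_self _
      _ ≤ ‖((A - B : ℝ) : ℂ) - B * w‖ := norm_sub_norm_le _ _
      _ = _ := by push_cast; ring_nf
  rw [norm_div]
  exact div_le_div₀ ((norm_nonneg w).trans hw) hw hpos hden

theorem stmt_12_general (d : ℕ) (A B : ℝ)
    (γ : ℕ → ℝ) (hγ : StrictMono γ)
    (hsum : Summable fun n => ((γ n) ^ (d + 1))⁻¹)
    (Ψ : ℂ → ℂ)
    (hΨ : ∀ w : ℂ, ‖w‖ < γ 0 →
      Ψ w = -(((d : ℂ) + 1) * ∑' n, w ^ (d + 1) / (((γ n : ℂ)) ^ (d + 1) - w ^ (d + 1))))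
    (ψ : ℝ → ℝ)
    (hψ : ∀ r : ℝ, ψ r = -(((d : ℝ) + 1) * ∑' n, r ^ (d + 1) / ((γ n) ^ (d + 1) - r ^ (d + 1)))) :
    ∀ z : ℂ, ‖z‖ < γ 0 →
      A - B + |B| * ψ (‖z‖) > 0 →
      ‖Ψ z / ((A : ℂ) - (B : ℂ) * (1 + Ψ z))‖ ≤
        (-ψ (‖z‖)) / (A - B + |B| * ψ (‖z‖)) := by
  intro z hz hpos
  have hΨz : ‖Ψ z‖ ≤ -ψ ‖z‖ := by
    have hd : ‖(d : ℂ) + 1‖ = d + 1 := by exact_mod_cast Complex.norm_natCast (d + 1)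
    rw [hΨ z hz, hψ, neg_neg, norm_neg, norm_mul, hd]
    gcongr
    exact norm_tsum_pow_div_pow_sub_pow_le hγ.monotone d.succ_ne_zero hsum hz
  convert norm_div_sub_mul_one_add_le hΨz (A := A) (B := B)
    (by rwa [mul_neg, sub_neg_eq_add]) using 2
  ring

theorem stmt_12 (d : ℕ) (hd : 1 ≤ d) (A B : ℝ) (hB : -1 ≤ B) (hBA : B < A) (hA : A ≤ 1)
    (γ : ℕ → ℝ) (hγ : StrictMono γ) (hγpos : ∀ n, 0 < γ n)
    (hsum : Summable fun n => ((γ n) ^ (d + 1))⁻¹)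
    (Ψ : ℂ → ℂ)
    (hΨ : ∀ w : ℂ, ‖w‖ < γ 0 →
      Ψ w = -(((d : ℂ) + 1) * ∑' n, w ^ (d + 1) / (((γ n : ℂ)) ^ (d + 1) - w ^ (d + 1))))
    (ψ : ℝ → ℝ)
    (hψ : ∀ r : ℝ, ψ r = -(((d : ℝ) + 1) * ∑' n, r ^ (d + 1) / ((γ n) ^ (d + 1) - r ^ (d + 1)))) :
    ∀ z : ℂ, ‖z‖ < γ 0 →
      A - B + |B| * ψ (‖z‖) > 0 →
      ‖Ψ z / ((A : ℂ) - (B : ℂ) * (1 + Ψ z))‖ ≤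
        (-ψ (‖z‖)) / (A - B + |B| * ψ (‖z‖)) :=
  stmt_12_general d A B γ hγ hsum Ψ hΨ ψ hψ
end
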